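/- (Witness decomposition.) For every *-term P, the evaluation tree se(P) can be decomposed as X[△↦Y] with X ∈ T_{A,△} and Y ∈ T_A, such that X contains the leaf △ and Y = se(R) where R is the rightmost ℓ-term of P (X may equal △). -/

import Mathlib

/-- Evaluation trees over a set `A` of atoms, with leaves `T` and `F`. -/
inductive ETree (A : Type) : Type
  | leafT : ETree A
  | leafF : ETree A
  | node : ETree A → A → ETree A → ETree A

namespace ETree

/-- Leaf replacement `X[T↦Y, F↦Z]`. -/
def repl {A : Type} : ETree A → ETree A → ETree A → ETree A
  | leafT, y, _ => y
  | leafF, _, z => z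
  | node l a r, y, z => node (repl l y z) a (repl r y z)

end ETree

namespace ETree

/-- The tree contains the leaf `T`. -/
def hasT {A : Type} : ETree A → Prop
  | leafT => True
  | leafF => False
  | node l _ r => hasT l ∨ hasT r

/-- The tree contains the leaf `F`. -/
def hasF {A : Type} : ETree A → Prop
  | leafT => False
  | leafF => True
  | node l _ r => hasF l ∨ hasF r

end ETree

/-- Closed sequential propositional statements over `A`:
`P ::= a | T | F | ¬P | P ∧❛ P | P ∨❛ P`. -/
inductive STerm (A : Type) : Type
  | atom : A → STerm A
  | tt : STerm A
  | ff : STerm A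
  | neg : STerm A → STerm A
  | and : STerm A → STerm A → STerm A
  | or : STerm A → STerm A → STerm A

/-- The short-circuit evaluation function `se : S_A → T_A`. -/
def se {A : Type} : STerm A → ETree A
  | .tt => .leafT
  | .ff => .leafF
  | .atom a => .node .leafT a .leafF
  | .neg P => (se P).repl .leafF .leafT
  | .and P Q => (se P).repl (se Q) .leafF
  | .or P Q => (se P).repl .leafT (se Q)

/-- T-terms: `P^T ::= T | (a ∧❛ P^T) ∨❛ P^T`. -/
inductive IsTTerm {A : Type} : STerm A → Prop
  | tt : IsTTerm .tt
  | node (a : A) {P Q} : IsTTerm P → IsTTerm Q → IsTTerm (.or (.and (.atom a) P) Q)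

/-- F-terms: `P^F ::= F | (a ∨❛ P^F) ∧❛ P^F`. -/
inductive IsFTerm {A : Type} : STerm A → Prop
  | ff : IsFTerm .ff
  | node (a : A) {P Q} : IsFTerm P → IsFTerm Q → IsFTerm (.and (.or (.atom a) P) Q)

/-- ℓ-terms: `P^ℓ ::= (a ∧❛ P^T) ∨❛ P^F | (¬a ∧❛ P^T) ∨❛ P^F`. -/
inductive IsLTerm {A : Type} : STerm A → Prop
  | pos (a : A) {P Q} : IsTTerm P → IsFTerm Q → IsLTerm (.or (.and (.atom a) P) Q)
  | neg (a : A) {P Q} : IsTTerm P → IsFTerm Q → IsLTerm (.or (.and (.neg (.atom a)) P) Q)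

mutual
/-- The category `P^c ::= P^ℓ | P^* ∧❛ P^d`. -/
inductive IsCTerm {A : Type} : STerm A → Prop
  | ell {P} : IsLTerm P → IsCTerm P
  | and {P Q} : IsStarTerm P → IsDTerm Q → IsCTerm (.and P Q)

/-- The category `P^d ::= P^ℓ | P^* ∨❛ P^c`. -/
inductive IsDTerm {A : Type} : STerm A → Prop
  | ell {P} : IsLTerm P → IsDTerm P
  | or {P Q} : IsStarTerm P → IsCTerm Q → IsDTerm (.or P Q)

/-- *-terms: `P^* ::= P^c | P^d`. -/
inductive IsStarTerm {A : Type} : STerm A → Prop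
  | c {P} : IsCTerm P → IsStarTerm P
  | d {P} : IsDTerm P → IsStarTerm P
end

/-- Binary trees over `A` with leaves in `{T, F, △}`. -/
inductive DTree (A : Type) : Type
  | leafT : DTree A
  | leafF : DTree A
  | leafD : DTree A
  | node : DTree A → A → DTree A → DTree A

namespace DTree

/-- `X[△↦Z]`: replace every `△`-leaf of `X` by the evaluation tree `Z`. -/
def substD {A : Type} : DTree A → ETree A → ETree A
  | leafT, _ => .leafT
  | leafF, _ => .leafF
  | leafD, z => z
  | node l a r, z => .node (substD l z) a (substD r z)

/-- The tree contains the leaf `T`. -/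
def hasT {A : Type} : DTree A → Prop
  | leafT => True
  | leafF => False
  | leafD => False
  | node l _ r => hasT l ∨ hasT r

/-- The tree contains the leaf `F`. -/
def hasF {A : Type} : DTree A → Prop
  | leafT => False
  | leafF => True
  | leafD => False
  | node l _ r => hasF l ∨ hasF r

/-- The tree contains the leaf `△`. -/
def hasD {A : Type} : DTree A → Prop
  | leafT => False
  | leafF => False
  | leafD => True
  | node l _ r => hasD l ∨ hasD r

end DTree

/-- `RightmostL P R`: `R` is the rightmost ℓ-term of the *-term `P`. -/
inductive RightmostL {A : Type} : STerm A → STerm A → Prop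
  | ell {P} : IsLTerm P → RightmostL P P
  | and {P Q R} : IsStarTerm P → RightmostL Q R → RightmostL (.and P Q) R
  | or {P Q R} : IsStarTerm P → RightmostL Q R → RightmostL (.or P Q) R

namespace ETree

variable {A : Type}

@[simp]
lemma hasT_repl (E Y Z : ETree A) : (E.repl Y Z).hasT ↔ E.hasT ∧ Y.hasT ∨ E.hasF ∧ Z.hasT := by
  induction E with
  | leafT | leafF => simp [repl, hasT, hasF]
  | node l _ r ihl ihr => simp only [repl, hasT, hasF, ihl, ihr]; tauto

@[simp]
lemma hasF_repl (E Y Z : ETree A) : (E.repl Y Z).hasF ↔ E.hasT ∧ Y.hasF ∨ E.hasF ∧ Z.hasF := by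
  induction E with
  | leafT | leafF => simp [repl, hasT, hasF]
  | node l _ r ihl ihr => simp only [repl, hasF, hasT, ihl, ihr]; tauto

/-- Leaf replacement `E[T↦Y, F↦Z]` with `Y` and `Z` in `T_{A,△}`. -/
def replD : ETree A → DTree A → DTree A → DTree A
  | leafT, y, _ => y
  | leafF, _, z => z
  | node l a r, y, z => .node (replD l y z) a (replD r y z)

lemma substD_replD (E : ETree A) (Y Z : DTree A) (W : ETree A) :
    (E.replD Y Z).substD W = E.repl (Y.substD W) (Z.substD W) := by
  induction E with
  | leafT | leafF => rfl
  | node l _ r ihl ihr => simp only [replD, DTree.substD, repl, ihl, ihr]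

lemma hasD_replD (E : ETree A) (Y Z : DTree A) :
    (E.replD Y Z).hasD ↔ E.hasT ∧ Y.hasD ∨ E.hasF ∧ Z.hasD := by
  induction E with
  | leafT | leafF => simp [replD, hasT, hasF]
  | node l _ r ihl ihr => simp only [replD, DTree.hasD, hasT, hasF, ihl, ihr]; tauto

end ETree

section

variable {A : Type}

lemma IsTTerm.hasT_se {P : STerm A} (h : IsTTerm P) : (se P).hasT := by
  induction h with
  | tt => trivial
  | node _ _ _ _ ihQ => simp [se, ETree.hasT, ETree.hasF, ihQ]

lemma IsFTerm.hasF_se {P : STerm A} (h : IsFTerm P) : (se P).hasF := by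
  induction h with
  | ff => trivial
  | node _ _ _ _ ihQ => simp [se, ETree.hasT, ETree.hasF, ihQ]

lemma IsLTerm.hasT_se_and_hasF_se {P : STerm A} (h : IsLTerm P) :
    (se P).hasT ∧ (se P).hasF := by
  cases h with
  | pos _ hP hQ | neg _ hP hQ =>
    simp [se, ETree.repl, ETree.hasT, ETree.hasF, hP.hasT_se, hQ.hasF_se]

lemma IsStarTerm.and_inv {P Q : STerm A} : IsStarTerm (.and P Q) → IsStarTerm P ∧ IsStarTerm Q
  | .c (.and hP hQ) => ⟨hP, .d hQ⟩
  | .c (.ell h) | .d (.ell h) => nomatch h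

lemma IsStarTerm.or_inv {P Q : STerm A} :
    IsStarTerm (.or P Q) → IsLTerm (.or P Q) ∨ IsStarTerm P ∧ IsStarTerm Q
  | .d (.or hP hQ) => .inr ⟨hP, .c hQ⟩
  | .c (.ell h) | .d (.ell h) => .inl h

/-- Induction on *-terms, forgetting the alternation between `P^c` and `P^d`. -/
@[elab_as_elim]
theorem IsStarTerm.induction {motive : STerm A → Prop}
    (ell : ∀ {P}, IsLTerm P → motive P)
    (and : ∀ {P Q}, IsStarTerm P → IsStarTerm Q → motive P → motive Q → motive (.and P Q))
    (or : ∀ {P Q}, IsStarTerm P → IsStarTerm Q → motive P → motive Q → motive (.or P Q))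
    {P : STerm A} (h : IsStarTerm P) : motive P := by
  induction P with
  | and P Q ihP ihQ =>
    obtain ⟨hP, hQ⟩ := h.and_inv
    exact and hP hQ (ihP hP) (ihQ hQ)
  | or P Q ihP ihQ =>
    rcases h.or_inv with hl | ⟨hP, hQ⟩
    · exact ell hl
    · exact or hP hQ (ihP hP) (ihQ hQ)
  | atom | tt | ff | neg =>
    rcases h with (⟨⟨⟩⟩ | ⟨⟩) | (⟨⟨⟩⟩ | ⟨⟩)

lemma IsStarTerm.hasT_se_and_hasF_se {P : STerm A} (h : IsStarTerm P) :
    (se P).hasT ∧ (se P).hasF :=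
  IsStarTerm.induction IsLTerm.hasT_se_and_hasF_se
    (fun _ _ ihP ihQ => by simp [se, ETree.hasT, ETree.hasF, ihP, ihQ])
    (fun _ _ ihP ihQ => by simp [se, ETree.hasT, ETree.hasF, ihP, ihQ]) h

lemma IsStarTerm.exists_rightmostL {P : STerm A} (h : IsStarTerm P) : ∃ R, RightmostL P R :=
  IsStarTerm.induction (fun hl => ⟨_, .ell hl⟩)
    (fun hP _ _ ihQ => ihQ.imp fun _ => .and hP) (fun hP _ _ ihQ => ihQ.imp fun _ => .or hP) h

/-- In `se (P ∧❛ Q)` the tree `se Q` hangs at the `T`-leaves of `se P`, in `se (P ∨❛ Q)` at its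
`F`-leaves; a *-term `P` has leaves of both kinds, so `△` survives the replacement. -/
lemma RightmostL.exists_se_eq_substD {P R : STerm A} (h : RightmostL P R) :
    ∃ X : DTree A, X.hasD ∧ se P = X.substD (se R) := by
  induction h with
  | ell _ => exact ⟨.leafD, trivial, rfl⟩
  | @and P _ _ hP _ ih =>
    obtain ⟨X, hX, hse⟩ := ih
    refine ⟨(se P).replD X .leafF, ?_, ?_⟩
    · exact (ETree.hasD_replD _ _ _).2 (.inl ⟨hP.hasT_se_and_hasF_se.1, hX⟩)
    · rw [ETree.substD_replD, ← hse]; rfl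
  | @or P _ _ hP _ ih =>
    obtain ⟨X, hX, hse⟩ := ih
    refine ⟨(se P).replD .leafT X, ?_, ?_⟩
    · exact (ETree.hasD_replD _ _ _).2 (.inr ⟨hP.hasT_se_and_hasF_se.2, hX⟩)
    · rw [ETree.substD_replD, ← hse]; rfl

end

/-- Witness decomposition: for every *-term `P`, `se(P)` decomposes as `X[△↦Y]` where `X`
contains `△` and `Y = se(R)` for the rightmost ℓ-term `R` of `P`. -/
theorem witness_decomposition {A : Type} [Nonempty A] (P : STerm A) (hP : IsStarTerm P) :
    ∃ (X : DTree A) (R : STerm A),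
      RightmostL P R ∧ X.hasD ∧ se P = X.substD (se R) := by
  obtain ⟨R, hR⟩ := hP.exists_rightmostL
  obtain ⟨X, hX, hse⟩ := hR.exists_se_eq_substD
  exact ⟨X, R, hR, hX, hse⟩
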